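/- arXiv:math/0106131 — 3 statements merged into one kernel-verified Lean document; each statement's English description precedes it below -/
import Mathlib

section
/- Let B be a C*-algebra, let A be a C*-subalgebra of B, and let J be an essential closed two-sided ideal of A. If y ∈ B satisfies j·y = 0 for all j ∈ J, then ‖a − y‖ ≥ ‖a‖ for every a ∈ A. (In particular, the quotient map of B by the right A-submodule {y ∈ B : J·y = 0} is isometric on A.) -/
open scoped ContinuousMapZero

/-- `J` is a closed two-sided ideal of the C*-subalgebra `A` of `B`. -/
def IsClosedTwoSidedIdealOf {B : Type*} [NonUnitalCStarAlgebra B]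
    (A : NonUnitalStarSubalgebra ℂ B) (J : Submodule ℂ B) : Prop :=
  (J : Set B) ⊆ (A : Set B) ∧ IsClosed (J : Set B) ∧
    ∀ a ∈ A, ∀ j ∈ J, a * j ∈ J ∧ j * a ∈ J

/-- `J` is an essential closed two-sided ideal of the C*-subalgebra `A` of `B`: it is a
closed two-sided ideal of `A` and `J ∩ K ≠ {0}` for every nonzero closed two-sided ideal
`K` of `A`. -/
def IsEssentialIdealOf {B : Type*} [NonUnitalCStarAlgebra B]
    (A : NonUnitalStarSubalgebra ℂ B) (J : Submodule ℂ B) : Prop :=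
  IsClosedTwoSidedIdealOf A J ∧ ∀ K : Submodule ℂ B, IsClosedTwoSidedIdealOf A K →
    (∃ y ∈ K, y ≠ 0) → ∃ x, x ∈ J ∧ x ∈ K ∧ x ≠ 0

lemma cfcn_mem_of_mem {B : Type*} [NonUnitalCStarAlgebra B]
    (A : NonUnitalStarSubalgebra ℂ B) (hA : IsClosed (A : Set B))
    {b : B} (hb : IsSelfAdjoint b) (hbA : b ∈ A) (f : ℝ → ℝ) :
    cfcₙ f b ∈ A := by
  by_cases h : ContinuousOn f (quasispectrum ℝ b) ∧ f 0 = 0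
  · rw [cfcₙ_apply f b h.1 h.2 hb]
    have h0 : ((0 : quasispectrum ℝ b) : ℝ) = 0 := rfl
    have key : ∀ g : ContinuousMapZero (quasispectrum ℝ b) ℝ, cfcₙHom hb g ∈ A := by
      intro g
      induction g using ContinuousMapZero.induction_on_of_compact with
      | zero => rw [map_zero]; exact A.zero_mem
      | id =>
          have hid : (cfcₙHom hb) (ContinuousMapZero.id (quasispectrum ℝ b)) = b := cfcₙHom_id hb
          rwa [hid]
      | star_id =>
          have hid : (cfcₙHom hb) (ContinuousMapZero.id (quasispectrum ℝ b)) = b := cfcₙHom_id hb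
          rw [map_star, hid]; exact star_mem hbA
      | add f g hf hg => rw [map_add]; exact A.add_mem hf hg
      | mul f g hf hg => rw [map_mul]; exact A.mul_mem hf hg
      | smul r f hf =>
          rw [map_smul, ← algebraMap_smul ℂ r (cfcₙHom hb f)]
          exact A.smul_mem _ hf
      | frequently f hf =>
          have hmem : f ∈ closure {g | cfcₙHom hb g ∈ A} := mem_closure_iff_frequently.mpr hf
          have hcl : IsClosed {g : ContinuousMapZero (quasispectrum ℝ b) ℝ | cfcₙHom hb g ∈ A} :=
            hA.preimage (cfcₙHom_continuous hb)
          exact hcl.closure_subset hmem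
    exact key _
  · rw [cfcₙ_apply_of_not_and_and]
    · exact A.zero_mem
    · tauto

/-- Key lemma for "case 2": if `G ∈ A` is annihilated on the left by all of `J`, and `J` is
essential, then `G = 0`. -/
lemma eq_zero_of_ideal_ann {B : Type*} [NonUnitalCStarAlgebra B]
    (A : NonUnitalStarSubalgebra ℂ B) (hA : IsClosed (A : Set B))
    (J : Submodule ℂ B)
    (hJr : ∀ u ∈ A, ∀ j ∈ J, j * u ∈ J)
    (hess : ∀ K : Submodule ℂ B, IsClosedTwoSidedIdealOf A K →
      (∃ y ∈ K, y ≠ 0) → ∃ x, x ∈ J ∧ x ∈ K ∧ x ≠ 0)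
    {G : B} (hGA : G ∈ A) (hGsa : IsSelfAdjoint G)
    (hzero : ∀ z ∈ J, z * G = 0) : G = 0 := by
  by_contra hG0
  classical
  set T : Set B := {x | x = G ∨ (∃ u ∈ A, x = u * G) ∨ (∃ v ∈ A, x = G * v) ∨
    (∃ u ∈ A, ∃ v ∈ A, x = u * G * v)} with hT
  set L : Submodule ℂ B := Submodule.span ℂ T with hL
  set K : Submodule ℂ B := L.topologicalClosure with hK
  have hKcoe : (K : Set B) = closure (L : Set B) := rfl
  have hTA : T ⊆ (A : Set B) := by
    rintro x (rfl | ⟨u, hu, rfl⟩ | ⟨v, hv, rfl⟩ | ⟨u, hu, v, hv, rfl⟩)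
    · exact hGA
    · exact mul_mem hu hGA
    · exact mul_mem hGA hv
    · exact mul_mem (mul_mem hu hGA) hv
  have hLA : (L : Set B) ⊆ (A : Set B) := by
    intro x hx
    induction hx using Submodule.span_induction with
    | mem t ht => exact hTA ht
    | zero => exact A.zero_mem
    | add s t _ _ hs ht => exact A.add_mem hs ht
    | smul c t _ ht => exact A.smul_mem c ht
  have hKA : (K : Set B) ⊆ (A : Set B) := by
    rw [hKcoe]; exact closure_minimal hLA hA
  -- left multiplication stability
  have hmulL : ∀ u ∈ A, ∀ k ∈ K, u * k ∈ K := by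
    intro u hu k hk
    have h1 : ∀ t ∈ L, u * t ∈ L := by
      intro t ht
      induction ht using Submodule.span_induction with
      | mem t ht =>
          refine Submodule.subset_span ?_
          obtain (rfl | ⟨u', hu', rfl⟩ | ⟨v, hv, rfl⟩ | ⟨u', hu', v, hv, rfl⟩) := ht
          · exact Or.inr (Or.inl ⟨u, hu, rfl⟩)
          · exact Or.inr (Or.inl ⟨u * u', mul_mem hu hu', by rw [mul_assoc]⟩)
          · exact Or.inr (Or.inr (Or.inr ⟨u, hu, v, hv, by rw [mul_assoc]⟩))
          · exact Or.inr (Or.inr (Or.inr ⟨u * u', mul_mem hu hu', v, hv, by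
              simp only [mul_assoc]⟩))
      | zero => rw [mul_zero]; exact L.zero_mem
      | add s t _ _ hs ht => rw [mul_add]; exact L.add_mem hs ht
      | smul c t _ ht => rw [mul_smul_comm]; exact L.smul_mem c ht
    have hmt : Set.MapsTo (fun t => u * t) (L : Set B) (L : Set B) := h1
    exact hmt.closure (continuous_const.mul continuous_id) hk
  -- right multiplication stability
  have hmulR : ∀ v ∈ A, ∀ k ∈ K, k * v ∈ K := by
    intro v hv k hk
    have h1 : ∀ t ∈ L, t * v ∈ L := by
      intro t ht
      induction ht using Submodule.span_induction with
      | mem t ht =>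
          refine Submodule.subset_span ?_
          obtain (rfl | ⟨u', hu', rfl⟩ | ⟨v', hv', rfl⟩ | ⟨u', hu', v', hv', rfl⟩) := ht
          · exact Or.inr (Or.inr (Or.inl ⟨v, hv, rfl⟩))
          · exact Or.inr (Or.inr (Or.inr ⟨u', hu', v, hv, rfl⟩))
          · exact Or.inr (Or.inr (Or.inl ⟨v' * v, mul_mem hv' hv, by rw [mul_assoc]⟩))
          · exact Or.inr (Or.inr (Or.inr ⟨u', hu', v' * v, mul_mem hv' hv, by
              simp only [mul_assoc]⟩))
      | zero => rw [zero_mul]; exact L.zero_mem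
      | add s t _ _ hs ht => rw [add_mul]; exact L.add_mem hs ht
      | smul c t _ ht => rw [smul_mul_assoc]; exact L.smul_mem c ht
    have hmt : Set.MapsTo (fun t => t * v) (L : Set B) (L : Set B) := h1
    exact hmt.closure (continuous_id.mul continuous_const) hk
  -- star stability
  have hstar : ∀ k ∈ K, star k ∈ K := by
    intro k hk
    have h1 : ∀ t ∈ L, star t ∈ L := by
      intro t ht
      induction ht using Submodule.span_induction with
      | mem t ht =>
          refine Submodule.subset_span ?_
          obtain (rfl | ⟨u', hu', rfl⟩ | ⟨v', hv', rfl⟩ | ⟨u', hu', v', hv', rfl⟩) := ht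
          · rw [hGsa.star_eq]; exact Or.inl rfl
          · rw [star_mul, hGsa.star_eq]
            exact Or.inr (Or.inr (Or.inl ⟨star u', star_mem hu', rfl⟩))
          · rw [star_mul, hGsa.star_eq]
            exact Or.inr (Or.inl ⟨star v', star_mem hv', rfl⟩)
          · refine Or.inr (Or.inr (Or.inr ⟨star v', star_mem hv', star u', star_mem hu', ?_⟩))
            simp only [star_mul, hGsa.star_eq, mul_assoc]
      | zero => rw [star_zero]; exact L.zero_mem
      | add s t _ _ hs ht => rw [star_add]; exact L.add_mem hs ht
      | smul c t _ ht =>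
          rw [star_smul]
          exact L.smul_mem _ ht
    have hmt : Set.MapsTo (fun t => star t) (L : Set B) (L : Set B) := h1
    exact hmt.closure continuous_star hk
  -- J annihilates K
  have hann : ∀ z ∈ J, ∀ k ∈ K, z * k = 0 := by
    intro z hz k hk
    have hS : IsClosed {v : B | z * v = 0} :=
      isClosed_singleton.preimage (continuous_const.mul continuous_id)
    have h1 : (L : Set B) ⊆ {v : B | z * v = 0} := by
      intro t ht
      induction ht using Submodule.span_induction with
      | mem t ht =>
          obtain (rfl | ⟨u', hu', rfl⟩ | ⟨v', hv', rfl⟩ | ⟨u', hu', v', hv', rfl⟩) := ht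
          · exact hzero z hz
          · show z * (u' * G) = 0
            rw [← mul_assoc]; exact hzero _ (hJr u' hu' z hz)
          · show z * (G * v') = 0
            rw [← mul_assoc, hzero z hz, zero_mul]
          · show z * (u' * G * v') = 0
            rw [show u' * G * v' = u' * (G * v') by rw [mul_assoc], ← mul_assoc, ← mul_assoc,
              hzero _ (hJr u' hu' z hz), zero_mul]
      | zero => show z * 0 = 0; rw [mul_zero]
      | add s t _ _ hs ht => show z * (s + t) = 0; rw [mul_add, hs, ht, add_zero]
      | smul c t _ ht => show z * (c • t) = 0; rw [mul_smul_comm, ht, smul_zero]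
    exact closure_minimal h1 hS hk
  -- conclude
  have hKideal : IsClosedTwoSidedIdealOf A K :=
    ⟨hKA, by rw [hKcoe]; exact isClosed_closure,
      fun u hu j hj => ⟨hmulL u hu j hj, hmulR u hu j hj⟩⟩
  have hGK : G ∈ K := Submodule.le_topologicalClosure L (Submodule.subset_span (Or.inl rfl))
  obtain ⟨x, hxJ, hxK, hx0⟩ := hess K hKideal ⟨G, hGK, hG0⟩
  have h1 : x * star x = 0 := hann x hxJ (star x) (hstar x hxK)
  have h2 : ‖x‖ * ‖x‖ = 0 := by rw [← CStarRing.norm_self_mul_star, h1, norm_zero]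
  exact hx0 (norm_eq_zero.mp (mul_self_eq_zero.mp h2))

/-- If `y ∈ B` is annihilated by an essential closed two-sided ideal `J` of a
C*-subalgebra `A ⊆ B`, then `‖a - y‖ ≥ ‖a‖` for every `a ∈ A`; in particular the quotient
by the right submodule `{y | J·y = 0}` is isometric on `A`. -/
theorem norm_sub_ge_of_essential_ideal_annihilates {B : Type*} [NonUnitalCStarAlgebra B]
    (A : NonUnitalStarSubalgebra ℂ B) (hA : IsClosed (A : Set B))
    (J : Submodule ℂ B) (hJ : IsEssentialIdealOf A J)
    (y : B) (hy : ∀ j ∈ J, j * y = 0) :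
    ∀ a ∈ A, ‖a‖ ≤ ‖a - y‖ := by
  obtain ⟨⟨hJA, hJcl, hJid⟩, hess⟩ := hJ
  intro a haA
  by_contra hcon
  push_neg at hcon
  set c := ‖a - y‖ with hcdef
  have hc0 : 0 ≤ c := norm_nonneg _
  have ha0 : 0 < ‖a‖ := lt_of_le_of_lt hc0 hcon
  set b := a * star a with hbdef
  have hbsa : IsSelfAdjoint b := IsSelfAdjoint.mul_star_self a
  have hbA : b ∈ A := mul_mem haA (star_mem haA)
  have hbn : ‖b‖ = ‖a‖ * ‖a‖ := CStarRing.norm_self_mul_star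
  set r : ℝ := (c ^ 2 + ‖a‖ ^ 2) / 2 with hrdef
  have hr1 : c ^ 2 < r := by rw [hrdef]; nlinarith
  have hr2 : r < ‖a‖ ^ 2 := by rw [hrdef]; nlinarith
  have hr0 : 0 < r := lt_of_le_of_lt (sq_nonneg c) hr1
  have hg0 : max ((0:ℝ) - r) 0 = 0 := max_eq_right (by linarith)
  set G := cfcₙ (fun s : ℝ => max (s - r) 0) b with hGdef
  have hGA : G ∈ A := cfcn_mem_of_mem A hA hbsa hbA _
  have hGsa : IsSelfAdjoint G := cfcₙ_predicate _ b
  -- the estimate coming from `j * y = 0`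
  have hJest : ∀ w ∈ J, ‖w * a‖ ≤ ‖w‖ * c := by
    intro w hw
    have h : w * a = w * (a - y) := by rw [mul_sub, hy w hw, sub_zero]
    rw [h, hcdef]; exact norm_mul_le _ _
  -- unitization setup
  set β : Unitization ℂ B := (b : Unitization ℂ B) with hβdef
  have hβ : IsSelfAdjoint β := hbsa.inr ℂ
  have hβnn : 0 ≤ β := by
    rw [hβdef, hbdef, Unitization.inr_mul, Unitization.inr_star]
    exact mul_star_self_nonneg _
  set E : Unitization ℂ B := cfc (fun s : ℝ => max (s - r) 0) β with hEdef
  have hGE : (G : Unitization ℂ B) = E := by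
    rw [hGdef, hEdef, Unitization.real_cfcₙ_eq_cfc_inr b _ (by simpa using hg0)]
  have hE : 0 ≤ E := by rw [hEdef]; exact cfc_nonneg (fun x _ => le_max_right _ _)
  have hEsa : IsSelfAdjoint E := by rw [hEdef]; exact cfc_predicate _ β
  have h1 : cfc (fun s : ℝ => max (s - r) 0 * s * max (s - r) 0) β = E * β * E := by
    rw [hEdef, cfc_mul _ _ β (by fun_prop) (by fun_prop),
      cfc_mul _ _ β (by fun_prop) (by fun_prop), cfc_id' ℝ β]
  have h2 : cfc (fun s : ℝ => max (s - r) 0 * s * max (s - r) 0) β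
      = r • (E * E) + E * (E * E) := by
    rw [show (fun s : ℝ => max (s - r) 0 * s * max (s - r) 0)
        = (fun s : ℝ => r * (max (s - r) 0 * max (s - r) 0)
          + max (s - r) 0 * (max (s - r) 0 * max (s - r) 0)) by
      funext s
      rcases le_total s r with h | h
      · simp [max_eq_right (by linarith : s - r ≤ 0)]
      · rw [max_eq_left (by linarith : (0:ℝ) ≤ s - r)]; ring]
    rw [cfc_add β _ _ (by fun_prop) (by fun_prop), cfc_const_mul r _ β (by fun_prop),
      cfc_mul _ _ β (by fun_prop) (by fun_prop), cfc_mul _ _ β (by fun_prop) (by fun_prop),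
      cfc_mul _ _ β (by fun_prop) (by fun_prop), ← hEdef]
  have hEβE : E * β * E = r • (E * E) + E * (E * E) := by rw [← h1, h2]
  -- case distinction
  by_cases hzero : ∀ z ∈ J, z * G = 0
  · -- case 2: G is annihilated by J, hence G = 0, contradiction with ‖b‖ > r
    have hJr : ∀ u ∈ A, ∀ j ∈ J, j * u ∈ J := fun u hu j hj => (hJid u hu j hj).2
    have hG0 : G = 0 := eq_zero_of_ideal_ann A hA J hJr hess hGA hGsa hzero
    have hE0 : E = 0 := by rw [← hGE, hG0, Unitization.inr_zero]
    have hsplit : β = cfc (fun s : ℝ => min s r) β := by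
      conv_lhs => rw [← cfc_id' ℝ β]
      have : cfc (fun s : ℝ => s) β = cfc (fun s : ℝ => min s r) β + E := by
        rw [hEdef, ← cfc_add β _ _ (by fun_prop) (by fun_prop)]
        refine cfc_congr fun x _ => ?_
        rcases le_total x r with h | h
        · simp [min_eq_left h, max_eq_right (by linarith : x - r ≤ 0)]
        · simp only [min_eq_right h, max_eq_left (by linarith : (0:ℝ) ≤ x - r)]; ring
      rw [this, hE0, add_zero]
    have hble : ‖β‖ ≤ r := by
      rw [hsplit]
      refine norm_cfc_le hr0.le fun x hx => ?_
      have hx0 : 0 ≤ x := spectrum_nonneg_of_nonneg hβnn hx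
      rw [Real.norm_eq_abs, abs_le]
      exact ⟨by linarith [le_min hx0 hr0.le], min_le_right x r⟩
    have hβn : ‖β‖ = ‖a‖ * ‖a‖ := by rw [hβdef, Unitization.norm_inr, hbn]
    nlinarith [hble, hβn, hr2]
  · -- case 1
    push_neg at hzero
    obtain ⟨z, hzJ, hzG⟩ := hzero
    set w := z * G with hwdef
    have hwJ : w ∈ J := (hJid G hGA z hzJ).2
    have hw0 : w ≠ 0 := hzG
    have hwa : ‖w * a‖ ≤ ‖w‖ * c := hJest w hwJ
    have hwpos : 0 < ‖w‖ := norm_pos_iff.mpr hw0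
    set W : Unitization ℂ B := (w : Unitization ℂ B) with hWdef
    have hWn : ‖W‖ = ‖w‖ := Unitization.norm_inr w
    have hW : W = (z : Unitization ℂ B) * E := by rw [hWdef, hwdef, Unitization.inr_mul, hGE]
    have hsW : star W = E * star (z : Unitization ℂ B) := by rw [hW, star_mul, hEsa.star_eq]
    have hkey : W * β * star W = (z : Unitization ℂ B) * (E * β * E) * star (z : Unitization ℂ B) := by
      rw [hsW, hW]; simp only [mul_assoc]
    have hid1 : W * β * star W = r • (W * star W) + W * E * star W := by
      rw [hkey, hEβE]
      rw [hsW, hW]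
      simp only [mul_add, add_mul, mul_smul_comm, smul_mul_assoc, mul_assoc]
    have hpos : 0 ≤ W * E * star W := star_right_conjugate_nonneg hE W
    have hle : r • (W * star W) ≤ W * β * star W := by
      rw [hid1]; exact le_add_of_nonneg_right hpos
    set W' : Unitization ℂ B := ((Real.sqrt r : ℂ)) • W with hW'def
    have hW' : W' * star W' = r • (W * star W) := by
      rw [hW'def, star_smul, smul_mul_smul_comm]
      have hc : star ((Real.sqrt r : ℝ) : ℂ) = ((Real.sqrt r : ℝ) : ℂ) := by
        rw [RCLike.star_def, Complex.conj_ofReal]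
      rw [hc, ← Complex.ofReal_mul, Real.mul_self_sqrt hr0.le, ← Complex.coe_algebraMap,
        algebraMap_smul]
    have h0le : (0 : Unitization ℂ B) ≤ W' * star W' := mul_star_self_nonneg W'
    have hnorm : ‖W' * star W'‖ ≤ ‖W * β * star W‖ :=
      CStarAlgebra.norm_le_norm_of_nonneg_of_le h0le (hW' ▸ hle)
    have l1 : ‖W' * star W'‖ = r * (‖w‖ * ‖w‖) := by
      rw [CStarRing.norm_self_mul_star, hW'def, norm_smul, hWn]
      have hnc : ‖((Real.sqrt r : ℝ) : ℂ)‖ = Real.sqrt r := by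
        rw [Complex.norm_real, Real.norm_eq_abs, abs_of_nonneg (Real.sqrt_nonneg r)]
      rw [hnc, mul_mul_mul_comm, Real.mul_self_sqrt hr0.le]
    have r1 : W * β * star W = ((w * b * star w : B) : Unitization ℂ B) := by
      simp only [hWdef, hβdef, Unitization.inr_mul, Unitization.inr_star, star_mul, mul_assoc]
    have r2 : ‖W * β * star W‖ = ‖w * a‖ * ‖w * a‖ := by
      rw [r1, Unitization.norm_inr]
      have : w * b * star w = (w * a) * star (w * a) := by
        simp only [hbdef, star_mul, mul_assoc]
      rw [this, CStarRing.norm_self_mul_star]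
    rw [l1, r2] at hnorm
    have hfin : ‖w * a‖ * ‖w * a‖ ≤ (‖w‖ * c) * (‖w‖ * c) :=
      mul_le_mul hwa hwa (norm_nonneg _) (by positivity)
    have h5 : r * (‖w‖ * ‖w‖) ≤ (‖w‖ * c) * (‖w‖ * c) := le_trans hnorm hfin
    have h6 : 0 < ‖w‖ * ‖w‖ := by positivity
    have h7 : (‖w‖ * c) * (‖w‖ * c) = (c * c) * (‖w‖ * ‖w‖) := by ring
    have h8 : r ≤ c * c := le_of_mul_le_mul_right (by linarith) h6
    have h9 : c ^ 2 = c * c := sq c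
    linarith
end

section
/- Let J be a C*-algebra and let ψ : J → J be a linear map satisfying ψ(a·b) = ψ(a)·b for all a, b ∈ J (i.e. ψ is a right J-module map). Then ψ is automatically bounded, and moreover ψ is completely bounded with ‖ψ‖_cb = ‖ψ‖. -/
set_option synthInstance.maxHeartbeats 1000000
set_option maxHeartbeats 1000000

/-- The bounded operator on the ℓ²-direct sum of `n` copies of `H` induced by an `n × n`
matrix of bounded operators on `H`.  The norm of this operator is the canonical C*-norm on
`Mₙ(B(H))`, used to define the amplifications of linear maps. -/
noncomputable def matrixCLM {H : Type*} [NormedAddCommGroup H] [InnerProductSpace ℂ H]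
    {n : ℕ} (M : Matrix (Fin n) (Fin n) (H →L[ℂ] H)) :
    (PiLp 2 fun _ : Fin n => H) →L[ℂ] PiLp 2 fun _ : Fin n => H :=
  (((PiLp.continuousLinearEquiv 2 ℂ fun _ : Fin n => H).symm :
        (∀ _ : Fin n, H) →L[ℂ] PiLp 2 fun _ : Fin n => H).comp
      (ContinuousLinearMap.pi fun i => ∑ j, (M i j).comp (ContinuousLinearMap.proj j))).comp
    ((PiLp.continuousLinearEquiv 2 ℂ fun _ : Fin n => H) :
      (PiLp 2 fun _ : Fin n => H) →L[ℂ] ∀ _ : Fin n, H)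

instance {H : Type*} [NormedAddCommGroup H] [InnerProductSpace ℂ H] [CompleteSpace H] {n : ℕ} :
    CompleteSpace (PiLp 2 fun _ : Fin n => H) :=
  inferInstance

/-- The operator norm of a linear self-map of a C*-algebra, as the least bound. -/
noncomputable def linOpNorm {J : Type*} [NonUnitalCStarAlgebra J] (ψ : J →ₗ[ℂ] J) : ℝ :=
  sInf {C : ℝ | 0 ≤ C ∧ ∀ a : J, ‖ψ a‖ ≤ C * ‖a‖}

/-- `C` is a bound for all amplifications of the linear map `ψ : J → J`, where the matrix
norms on `Mₙ(J)` are computed via the isometric representation `π` of `J` on a Hilbert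
space. -/
def IsCBBoundRel {J : Type*} [NonUnitalCStarAlgebra J]
    {K : Type*} [NormedAddCommGroup K] [InnerProductSpace ℂ K] [CompleteSpace K]
    (π : J →⋆ₙₐ[ℂ] (K →L[ℂ] K)) (ψ : J →ₗ[ℂ] J) (C : ℝ) : Prop :=
  ∀ (n : ℕ) (X : Matrix (Fin n) (Fin n) J),
    ‖matrixCLM (X.map fun a => π (ψ a))‖ ≤ C * ‖matrixCLM (X.map ⇑π)‖

/-- The completely bounded norm `‖ψ‖_cb` of a linear self-map of a C*-algebra, relative to
an isometric representation `π` used to compute the matrix norms `Mₙ(J)`. -/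
noncomputable def cbNormRel {J : Type*} [NonUnitalCStarAlgebra J]
    {K : Type*} [NormedAddCommGroup K] [InnerProductSpace ℂ K] [CompleteSpace K]
    (π : J →⋆ₙₐ[ℂ] (K →L[ℂ] K)) (ψ : J →ₗ[ℂ] J) : ℝ :=
  sInf {C : ℝ | 0 ≤ C ∧ IsCBBoundRel π ψ C}


section Aux

variable {J : Type*} [NonUnitalCStarAlgebra J]

private lemma exists_mul_inr (a : Unitization ℂ J) (x : J) :
    ∃ y : J, a * (x : Unitization ℂ J) = (y : Unitization ℂ J) := by
  refine ⟨a.fst • x + a.snd * x, ?_⟩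
  ext
  · simp
  · simp [Unitization.snd_mul]

private lemma key_est {b x : J} {l : ℝ} (hb : IsSelfAdjoint (b : Unitization ℂ J)) (hl : 0 ≤ l)
    {p : ℝ → ℝ} (hp : Continuous p)
    (hx : (x : Unitization ℂ J) * star (x : Unitization ℂ J) ≤ l • cfc p (b : Unitization ℂ J))
    {f : ℝ → ℝ} (hf : Continuous f) {B : ℝ} (hB : 0 ≤ B)
    (hfB : ∀ t ∈ spectrum ℝ (b : Unitization ℂ J), 0 ≤ p t ∧ f t ^ 2 * p t ≤ B ^ 2) :
    ‖cfc f (b : Unitization ℂ J) * (x : Unitization ℂ J)‖ ≤ Real.sqrt l * B := by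
  set A := Unitization ℂ J
  set bA := (b : A)
  set xA := (x : A)
  set m := cfc f bA with hm_def
  have hm : IsSelfAdjoint m := cfc_predicate f bA
  -- norm squared
  have hsq : ‖m * xA‖ * ‖m * xA‖ = ‖m * (xA * star xA) * m‖ := by
    rw [← CStarRing.norm_self_mul_star (x := m * xA)]
    congr 1
    rw [star_mul, hm.star_eq]
    simp only [mul_assoc]
  have hconj_le : m * (xA * star xA) * m ≤ m * (l • cfc p bA) * m := by
    have := star_left_conjugate_le_conjugate hx m
    rwa [hm.star_eq] at this
  have hconj_pos : 0 ≤ m * (xA * star xA) * m := by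
    have := star_left_conjugate_nonneg (mul_star_self_nonneg xA) m
    rwa [hm.star_eq] at this
  have hnorm1 : ‖m * (xA * star xA) * m‖ ≤ ‖m * (l • cfc p bA) * m‖ :=
    CStarAlgebra.norm_le_norm_of_nonneg_of_le hconj_pos hconj_le
  have hmid : m * (l • cfc p bA) * m = l • (m * cfc p bA * m) := by
    rw [mul_smul_comm, smul_mul_assoc]
  have hcfc : m * cfc p bA * m = cfc (fun t => f t * p t * f t) bA := by
    rw [cfc_mul (fun t => f t * p t) f bA (by fun_prop) (by fun_prop),
      cfc_mul f p bA (by fun_prop) (by fun_prop)]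
  have hnorm2 : ‖cfc (fun t => f t * p t * f t) bA‖ ≤ B ^ 2 := by
    refine norm_cfc_le (by positivity) fun t ht => ?_
    obtain ⟨hp0, h1⟩ := hfB t ht
    have h2 : f t * p t * f t = f t ^ 2 * p t := by ring
    rw [h2, Real.norm_eq_abs, abs_of_nonneg (by positivity)]
    exact h1
  -- combine
  have hfinal : ‖m * xA‖ * ‖m * xA‖ ≤ (Real.sqrt l * B) * (Real.sqrt l * B) := by
    calc ‖m * xA‖ * ‖m * xA‖ = ‖m * (xA * star xA) * m‖ := hsq
      _ ≤ ‖m * (l • cfc p bA) * m‖ := hnorm1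
      _ = |l| * ‖m * cfc p bA * m‖ := by rw [hmid, norm_smul, Real.norm_eq_abs]
      _ = l * ‖cfc (fun t => f t * p t * f t) bA‖ := by rw [abs_of_nonneg hl, hcfc]
      _ ≤ l * B ^ 2 := by
          exact mul_le_mul_of_nonneg_left hnorm2 hl
      _ = (Real.sqrt l * B) * (Real.sqrt l * B) := by
          nlinarith [Real.sq_sqrt hl, Real.sqrt_nonneg l]
  have h0 : (0:ℝ) ≤ Real.sqrt l * B := by positivity
  nlinarith [norm_nonneg (m * xA)]

-- real inequality helpers
private lemma rineq1 {ε t R : ℝ} (hε : 0 < ε) (ht : 0 ≤ t) (htR : t ≤ R) :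
    (t / (t ^ 2 + ε)) ^ 2 * t ^ 4 ≤ R ^ 2 := by
  have hP : 0 < t ^ 2 + ε := by positivity
  have h1 : (t / (t ^ 2 + ε)) ^ 2 * t ^ 4 = (t ^ 3 / (t ^ 2 + ε)) ^ 2 := by
    field_simp
  have h2 : t ^ 3 / (t ^ 2 + ε) ≤ t := by
    rw [div_le_iff₀ hP]; nlinarith
  have h3 : 0 ≤ t ^ 3 / (t ^ 2 + ε) := by positivity
  nlinarith

private lemma rineq2 {ε δ t : ℝ} (hε : 0 < ε) (hεδ : ε ≤ δ) (ht : 0 ≤ t) :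
    (t / (t ^ 2 + ε) - t / (t ^ 2 + δ)) ^ 2 * t ^ 4 ≤ (Real.sqrt δ / 2) ^ 2 := by
  have hδ : 0 < δ := lt_of_lt_of_le hε hεδ
  set s := Real.sqrt δ with hs
  have hs0 : 0 < s := Real.sqrt_pos.mpr hδ
  have hs2 : s ^ 2 = δ := Real.sq_sqrt hδ.le
  have hP : 0 < t ^ 2 + ε := by positivity
  have hQ : 0 < t ^ 2 + δ := by positivity
  have hdiff : t / (t ^ 2 + ε) - t / (t ^ 2 + δ) = t * (δ - ε) / ((t ^ 2 + ε) * (t ^ 2 + δ)) := by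
    field_simp; ring
  have hrw : (t / (t ^ 2 + ε) - t / (t ^ 2 + δ)) ^ 2 * t ^ 4
      = (t ^ 3 * (δ - ε) / ((t ^ 2 + ε) * (t ^ 2 + δ))) ^ 2 := by
    rw [hdiff]; field_simp
  rw [hrw]
  have k1 : 2 * s * t ≤ t ^ 2 + δ := by nlinarith [sq_nonneg (t - s)]
  have key : t ^ 3 * (δ - ε) / ((t ^ 2 + ε) * (t ^ 2 + δ)) ≤ s / 2 := by
    rw [div_le_iff₀ (by positivity)]
    have e0 : t ^ 3 ≤ t * (t ^ 2 + ε) := by nlinarith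
    have e1 : t ^ 3 * (δ - ε) ≤ t * (t ^ 2 + ε) * s ^ 2 := by
      calc t ^ 3 * (δ - ε) ≤ t * (t ^ 2 + ε) * (δ - ε) := by
            exact mul_le_mul_of_nonneg_right e0 (by linarith)
        _ ≤ t * (t ^ 2 + ε) * s ^ 2 := by
            exact mul_le_mul_of_nonneg_left (by linarith) (mul_nonneg ht hP.le)
    have e2 : t * (t ^ 2 + ε) * s ^ 2 ≤ s / 2 * ((t ^ 2 + ε) * (t ^ 2 + δ)) := by
      have e3 : t * s ^ 2 ≤ s / 2 * (t ^ 2 + δ) := by nlinarith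
      calc t * (t ^ 2 + ε) * s ^ 2 = (t ^ 2 + ε) * (t * s ^ 2) := by ring
        _ ≤ (t ^ 2 + ε) * (s / 2 * (t ^ 2 + δ)) := by
            exact mul_le_mul_of_nonneg_left e3 hP.le
        _ = s / 2 * ((t ^ 2 + ε) * (t ^ 2 + δ)) := by ring
    linarith
  have knn : 0 ≤ t ^ 3 * (δ - ε) / ((t ^ 2 + ε) * (t ^ 2 + δ)) := div_nonneg (mul_nonneg (pow_nonneg ht 3) (by linarith)) (by positivity)
  nlinarith

private lemma rineq3 {ε t : ℝ} (hε : 0 < ε) (ht : 0 ≤ t) :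
    (ε / (t ^ 2 + ε)) ^ 2 * t ^ 4 ≤ ε ^ 2 := by
  have hP : 0 < t ^ 2 + ε := by positivity
  have h1 : (ε / (t ^ 2 + ε)) ^ 2 * t ^ 4 = (ε * t ^ 2 / (t ^ 2 + ε)) ^ 2 := by
    field_simp
  have h2 : ε * t ^ 2 / (t ^ 2 + ε) ≤ ε := by
    rw [div_le_iff₀ hP]; nlinarith
  have h3 : 0 ≤ ε * t ^ 2 / (t ^ 2 + ε) := by positivity
  nlinarith

private lemma douglas {h x : J} {l : ℝ} (hl : 0 ≤ l) (hh : 0 ≤ (h : Unitization ℂ J))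
    (hx : (x : Unitization ℂ J) * star (x : Unitization ℂ J)
      ≤ l • ((h : Unitization ℂ J) ^ 4)) :
    ∃ c : J, h * c = x ∧ ‖c‖ ≤ Real.sqrt l * ‖h‖ := by
  set hA := (h : Unitization ℂ J) with hA_def
  set xA := (x : Unitization ℂ J) with xA_def
  have hsa : IsSelfAdjoint hA := .of_nonneg hh
  have hp4 : cfc (fun t : ℝ => t ^ 4) hA = hA ^ 4 := by
    calc cfc (fun t : ℝ => t ^ 4) hA = cfc (fun t : ℝ => id t ^ 4) hA := rfl
      _ = cfc (id : ℝ → ℝ) hA ^ 4 := cfc_pow _ 4 hA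
      _ = hA ^ 4 := by rw [cfc_id ℝ hA]
  have hx' : xA * star xA ≤ l • cfc (fun t : ℝ => t ^ 4) hA := by rw [hp4]; exact hx
  have hspec : ∀ t ∈ spectrum ℝ hA, 0 ≤ t ∧ t ≤ ‖h‖ := by
    intro t ht
    refine ⟨spectrum_nonneg_of_nonneg hh ht, ?_⟩
    have := spectrum.norm_le_norm_of_mem ht
    rw [Real.norm_eq_abs] at this
    calc t ≤ |t| := le_abs_self t
      _ ≤ ‖hA‖ := this
      _ = ‖h‖ := Unitization.norm_inr h
  -- the approximants
  have hcont : ∀ ε : ℝ, 0 < ε → Continuous (fun t : ℝ => t / (t ^ 2 + ε)) := by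
    intro ε hε
    exact continuous_id.div (by continuity) (fun t => by positivity)
  set u : ℝ → J := fun ε => (exists_mul_inr (cfc (fun t : ℝ => t / (t ^ 2 + ε)) hA) x).choose
    with hu_def
  have hu : ∀ ε : ℝ, ((u ε : J) : Unitization ℂ J)
      = cfc (fun t : ℝ => t / (t ^ 2 + ε)) hA * xA :=
    fun ε => ((exists_mul_inr (cfc (fun t : ℝ => t / (t ^ 2 + ε)) hA) x).choose_spec).symm
  -- E1 : norm bound
  have E1 : ∀ ε : ℝ, 0 < ε → ‖u ε‖ ≤ Real.sqrt l * ‖h‖ := by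
    intro ε hε
    rw [← Unitization.norm_inr (𝕜 := ℂ) (u ε), hu ε]
    exact key_est hsa hl (by fun_prop) hx' (hcont ε hε) (norm_nonneg h)
      (fun t ht => ⟨by positivity, rineq1 hε (hspec t ht).1 (hspec t ht).2⟩)
  -- E2 : Cauchy estimate
  have E2 : ∀ ε δ : ℝ, 0 < ε → ε ≤ δ → ‖u ε - u δ‖ ≤ Real.sqrt l * (Real.sqrt δ / 2) := by
    intro ε δ hε hεδ
    have hδ : 0 < δ := lt_of_lt_of_le hε hεδ
    rw [← Unitization.norm_inr (𝕜 := ℂ) (u ε - u δ), Unitization.inr_sub, hu ε, hu δ]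
    rw [← sub_mul, ← cfc_sub (fun t : ℝ => t / (t ^ 2 + ε)) (fun t : ℝ => t / (t ^ 2 + δ)) hA
      (by fun_prop (disch := intro t _; positivity)) (by fun_prop (disch := intro t _; positivity))]
    refine key_est hsa hl (by fun_prop) hx' ((hcont ε hε).sub (hcont δ hδ)) (by positivity)
      (fun t ht => ⟨by positivity, rineq2 hε hεδ (hspec t ht).1⟩)
  -- E3 : approximate factorization
  have E3 : ∀ ε : ℝ, 0 < ε → ‖x - h * u ε‖ ≤ Real.sqrt l * ε := by
    intro ε hε
    have key : ((x - h * u ε : J) : Unitization ℂ J)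
        = cfc (fun t : ℝ => ε / (t ^ 2 + ε)) hA * xA := by
      rw [Unitization.inr_sub, Unitization.inr_mul, hu ε, ← mul_assoc]
      have h1 : cfc (fun t : ℝ => t * (t / (t ^ 2 + ε))) hA
          = hA * cfc (fun t : ℝ => t / (t ^ 2 + ε)) hA := by
        rw [cfc_mul (fun t : ℝ => t) (fun t : ℝ => t / (t ^ 2 + ε)) hA (by fun_prop)
          (by fun_prop (disch := intro t _; positivity)), cfc_id' ℝ hA]
      rw [← h1]
      rw [sub_eq_iff_eq_add, ← add_mul,
        ← cfc_add hA (fun t : ℝ => ε / (t ^ 2 + ε)) (fun t : ℝ => t * (t / (t ^ 2 + ε)))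
          (by fun_prop (disch := intro t _; positivity))
          (by fun_prop (disch := intro t _; positivity))]
      have hone : (fun t : ℝ => ε / (t ^ 2 + ε) + t * (t / (t ^ 2 + ε))) = fun _ : ℝ => (1:ℝ) := by
        funext t
        have hP : (0:ℝ) < t ^ 2 + ε := by positivity
        field_simp; ring
      rw [hone, cfc_const_one ℝ hA, one_mul]
    rw [← Unitization.norm_inr (𝕜 := ℂ) (x - h * u ε), key]
    refine key_est hsa hl (by fun_prop) hx'
      (continuous_const.div (by continuity) (fun t => by positivity)) hε.le
      (fun t ht => ⟨by positivity, rineq3 hε (hspec t ht).1⟩)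
  -- Cauchy sequence of approximants
  have sqrtpow : ∀ n : ℕ, Real.sqrt ((2:ℝ)⁻¹ ^ n) = Real.sqrt 2⁻¹ ^ n := by
    intro n
    have h1 : (Real.sqrt 2⁻¹ ^ n) ^ 2 = (2:ℝ)⁻¹ ^ n := by
      rw [show (Real.sqrt 2⁻¹ ^ n) ^ 2 = (Real.sqrt 2⁻¹ ^ 2) ^ n by ring,
        Real.sq_sqrt (by norm_num)]
    rw [← h1, Real.sqrt_sq (by positivity)]
  have hεpos : ∀ n : ℕ, (0:ℝ) < (2:ℝ)⁻¹ ^ n := fun n => by positivity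
  have hεmono : ∀ n : ℕ, (2:ℝ)⁻¹ ^ (n + 1) ≤ (2:ℝ)⁻¹ ^ n :=
    fun n => pow_le_pow_of_le_one (by norm_num) (by norm_num) (Nat.le_succ n)
  set v : ℕ → J := fun n => u ((2:ℝ)⁻¹ ^ n) with hv_def
  have hcauchy : CauchySeq v := by
    refine cauchySeq_of_le_geometric (Real.sqrt 2⁻¹) (Real.sqrt l / 2) ?_ ?_
    · rw [show (1:ℝ) = Real.sqrt 1 from (Real.sqrt_one).symm]
      exact Real.sqrt_lt_sqrt (by norm_num) (by norm_num)
    · intro n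
      rw [dist_eq_norm, norm_sub_rev]
      have := E2 ((2:ℝ)⁻¹ ^ (n + 1)) ((2:ℝ)⁻¹ ^ n) (hεpos (n + 1)) (hεmono n)
      rw [sqrtpow n] at this
      calc ‖v (n + 1) - v n‖ ≤ Real.sqrt l * (Real.sqrt 2⁻¹ ^ n / 2) := this
        _ = Real.sqrt l / 2 * Real.sqrt 2⁻¹ ^ n := by ring
  obtain ⟨c, hc⟩ := cauchySeq_tendsto_of_complete hcauchy
  refine ⟨c, ?_, ?_⟩
  · have h1 : Filter.Tendsto (fun n => x - h * v n) Filter.atTop (nhds (x - h * c)) :=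
      Filter.Tendsto.const_sub x (Filter.Tendsto.const_mul h hc)
    have h2 : Filter.Tendsto (fun n => x - h * v n) Filter.atTop (nhds 0) := by
      refine squeeze_zero_norm (fun n => E3 ((2:ℝ)⁻¹ ^ n) (hεpos n)) ?_
      rw [show (0:ℝ) = Real.sqrt l * 0 from (mul_zero _).symm]
      exact Filter.Tendsto.const_mul (Real.sqrt l)
        (tendsto_pow_atTop_nhds_zero_of_lt_one (by norm_num) (by norm_num))
    exact (sub_eq_zero.mp (tendsto_nhds_unique h1 h2)).symm
  · exact le_of_tendsto' (hc.norm) (fun n => E1 ((2:ℝ)⁻¹ ^ n) (hεpos n))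

private lemma psi_continuous (ψ : J →ₗ[ℂ] J) (hψ : ∀ a b : J, ψ (a * b) = ψ a * b) :
    Continuous ψ := by
  refine ψ.continuous_of_seq_closed_graph ?_
  intro a x y hax hay
  suffices hz : ∀ (b : ℕ → J) (z : J), Filter.Tendsto b Filter.atTop (nhds 0) →
      Filter.Tendsto (fun n => ψ (b n)) Filter.atTop (nhds z) → z = 0 by
    have h1 : Filter.Tendsto (fun n => a n - x) Filter.atTop (nhds 0) := by
      simpa using hax.sub_const x
    have h2 : Filter.Tendsto (fun n => ψ (a n - x)) Filter.atTop (nhds (y - ψ x)) := by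
      simp only [map_sub]
      exact (hay : Filter.Tendsto (fun n => ψ (a n)) Filter.atTop (nhds y)).sub_const (ψ x)
    exact (sub_eq_zero.mp (hz _ _ h1 h2)).symm ▸ rfl
  intro b z hb hz
  -- pass to a rapidly decreasing "subsequence"
  have hmet := Metric.tendsto_atTop.mp hb
  choose N hN using fun n : ℕ => hmet ((16:ℝ)⁻¹ ^ n) (by positivity)
  set w : ℕ → J := fun n => b (max n (N n)) with hw_def
  have hwnorm : ∀ n, ‖w n‖ ≤ (16:ℝ)⁻¹ ^ n := by
    intro n
    have := hN n (max n (N n)) (le_max_right _ _)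
    rw [dist_zero_right] at this
    exact this.le
  have hφ : Filter.Tendsto (fun n => max n (N n)) Filter.atTop Filter.atTop :=
    Filter.tendsto_atTop_mono (fun n => le_max_left n (N n)) Filter.tendsto_id
  have hzw : Filter.Tendsto (fun n => ψ (w n)) Filter.atTop (nhds z) := hz.comp hφ
  -- the dominating positive element
  have hsummable : Summable (fun n : ℕ => (2:ℝ) ^ n • (w n * star (w n))) := by
    refine Summable.of_norm_bounded (g := fun n => (8:ℝ)⁻¹ ^ n)
      (summable_geometric_of_lt_one (by norm_num) (by norm_num)) ?_
    intro n
    rw [norm_smul]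
    have h1 : ‖w n * star (w n)‖ ≤ (16:ℝ)⁻¹ ^ n * (16:ℝ)⁻¹ ^ n := by
      calc ‖w n * star (w n)‖ ≤ ‖w n‖ * ‖star (w n)‖ := norm_mul_le _ _
        _ = ‖w n‖ * ‖w n‖ := by rw [norm_star]
        _ ≤ (16:ℝ)⁻¹ ^ n * (16:ℝ)⁻¹ ^ n :=
            mul_le_mul (hwnorm n) (hwnorm n) (norm_nonneg _) (by positivity)
    calc ‖(2:ℝ) ^ n‖ * ‖w n * star (w n)‖
        ≤ (2:ℝ) ^ n * ((16:ℝ)⁻¹ ^ n * (16:ℝ)⁻¹ ^ n) := by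
          rw [Real.norm_eq_abs, abs_of_nonneg (by positivity)]
          exact mul_le_mul_of_nonneg_left h1 (by positivity)
      _ = ((2:ℝ) * ((16:ℝ)⁻¹ * (16:ℝ)⁻¹)) ^ n := by rw [mul_pow, mul_pow]
      _ ≤ (8:ℝ)⁻¹ ^ n := by
          refine pow_le_pow_left₀ (by norm_num) (by norm_num) n
  set d : J := ∑' n, (2:ℝ) ^ n • (w n * star (w n)) with hd_def
  -- facts about d in the unitization
  set inrAdd : J →+ Unitization ℂ J :=
    AddMonoidHom.mk' (fun j : J => (j : Unitization ℂ J)) (Unitization.inr_add ℂ) with hinrAdd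
  have hhs : HasSum (fun n : ℕ => (((2:ℝ) ^ n • (w n * star (w n)) : J) : Unitization ℂ J))
      ((d : J) : Unitization ℂ J) :=
    hsummable.hasSum.map inrAdd (Unitization.isometry_inr.continuous)
  have hterm : ∀ n : ℕ, (((2:ℝ) ^ n • (w n * star (w n)) : J) : Unitization ℂ J)
      = (2:ℝ) ^ n • ((w n : Unitization ℂ J) * star (w n : Unitization ℂ J)) := by
    intro n
    rw [Unitization.inr_smul, Unitization.inr_mul, Unitization.inr_star]
  have hd0 : 0 ≤ ((d : J) : Unitization ℂ J) := by
    rw [← hhs.tsum_eq]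
    refine tsum_nonneg fun n => ?_
    rw [hterm n]
    exact smul_nonneg (by positivity) (mul_star_self_nonneg _)
  have hdom : ∀ n : ℕ, (w n : Unitization ℂ J) * star (w n : Unitization ℂ J)
      ≤ (2:ℝ)⁻¹ ^ n • ((d : J) : Unitization ℂ J) := by
    intro n
    have h1 : (2:ℝ) ^ n • ((w n : Unitization ℂ J) * star (w n : Unitization ℂ J))
        ≤ ((d : J) : Unitization ℂ J) := by
      rw [← hhs.tsum_eq, ← hterm n]
      refine Summable.le_tsum hhs.summable n fun j _ => ?_
      rw [hterm j]
      exact smul_nonneg (by positivity) (mul_star_self_nonneg _)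
    have h2 := smul_le_smul_of_nonneg_left h1 (by positivity : (0:ℝ) ≤ (2:ℝ)⁻¹ ^ n)
    rwa [smul_smul, ← mul_pow, inv_mul_cancel₀ (by norm_num : (2:ℝ) ≠ 0), one_pow, one_smul] at h2
  -- the fourth root of d
  set h : J := cfcₙ (fun t : ℝ => |t| ^ ((4:ℝ)⁻¹)) d with hh_def
  have hf0 : (fun t : ℝ => |t| ^ ((4:ℝ)⁻¹)) 0 = 0 := by
    simp [Real.zero_rpow (by norm_num : ((4:ℝ)⁻¹) ≠ 0)]
  have hinrh : ((h : J) : Unitization ℂ J)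
      = cfc (fun t : ℝ => |t| ^ ((4:ℝ)⁻¹)) ((d : J) : Unitization ℂ J) :=
    Unitization.real_cfcₙ_eq_cfc_inr d _ hf0
  have hcont4 : Continuous (fun t : ℝ => |t| ^ ((4:ℝ)⁻¹)) := by
    fun_prop (disch := intros; first | positivity | norm_num)
  have hh0 : 0 ≤ ((h : J) : Unitization ℂ J) := by
    rw [hinrh]
    exact cfc_nonneg fun t _ => by positivity
  have hh4 : ((h : J) : Unitization ℂ J) ^ 4 = ((d : J) : Unitization ℂ J) := by
    have hdsa : IsSelfAdjoint ((d : J) : Unitization ℂ J) := .of_nonneg hd0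
    rw [hinrh, ← cfc_pow _ 4 _ (by fun_prop (disch := intros; first | positivity | norm_num)) hdsa]
    calc cfc (fun t : ℝ => (|t| ^ ((4:ℝ)⁻¹)) ^ (4:ℕ)) ((d : J) : Unitization ℂ J)
        = cfc (id : ℝ → ℝ) ((d : J) : Unitization ℂ J) := by
          refine cfc_congr fun t ht => ?_
          have ht0 : 0 ≤ t := spectrum_nonneg_of_nonneg hd0 ht
          rw [← Real.rpow_natCast (|t| ^ ((4:ℝ)⁻¹)) 4, ← Real.rpow_mul (abs_nonneg t)]
          norm_num [abs_of_nonneg ht0]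
      _ = ((d : J) : Unitization ℂ J) := cfc_id ℝ _
  -- factor through h using the Douglas lemma
  have hfac : ∀ n : ℕ, ∃ c : J, h * c = w n ∧ ‖c‖ ≤ Real.sqrt ((2:ℝ)⁻¹ ^ n) * ‖h‖ := by
    intro n
    refine douglas (by positivity) hh0 ?_
    rw [hh4]
    exact hdom n
  choose c hc hcnorm using hfac
  -- conclude
  have hzero : Filter.Tendsto (fun n => ψ (w n)) Filter.atTop (nhds 0) := by
    refine squeeze_zero_norm (a := fun n => ‖ψ h‖ * ‖h‖ * Real.sqrt 2⁻¹ ^ n) (fun n => ?_) ?_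
    · have h1 : ψ (w n) = ψ h * c n := by rw [← hc n, hψ h (c n)]
      have hsq : Real.sqrt ((2:ℝ)⁻¹ ^ n) = Real.sqrt 2⁻¹ ^ n := by
        have h2 : (Real.sqrt 2⁻¹ ^ n) ^ 2 = (2:ℝ)⁻¹ ^ n := by
          rw [show (Real.sqrt 2⁻¹ ^ n) ^ 2 = (Real.sqrt 2⁻¹ ^ 2) ^ n by ring,
            Real.sq_sqrt (by norm_num)]
        rw [← h2, Real.sqrt_sq (by positivity)]
      calc ‖ψ (w n)‖ = ‖ψ h * c n‖ := by rw [h1]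
        _ ≤ ‖ψ h‖ * ‖c n‖ := norm_mul_le _ _
        _ ≤ ‖ψ h‖ * (Real.sqrt ((2:ℝ)⁻¹ ^ n) * ‖h‖) :=
            mul_le_mul_of_nonneg_left (hcnorm n) (norm_nonneg _)
        _ = ‖ψ h‖ * ‖h‖ * Real.sqrt 2⁻¹ ^ n := by rw [hsq]; ring
    · rw [show (0:ℝ) = ‖ψ h‖ * ‖h‖ * 0 from (mul_zero _).symm]
      exact Filter.Tendsto.const_mul _
        (tendsto_pow_atTop_nhds_zero_of_lt_one (by positivity)
          (by rw [show (1:ℝ) = Real.sqrt 1 from Real.sqrt_one.symm]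
              exact Real.sqrt_lt_sqrt (by norm_num) (by norm_num)))
  exact tendsto_nhds_unique hzw hzero


private lemma linOpNorm_nonneg (ψ : J →ₗ[ℂ] J) : 0 ≤ linOpNorm ψ :=
  Real.sInf_nonneg fun _ hC => hC.1

private lemma psi_exists_bound (ψ : J →ₗ[ℂ] J) (hψ : ∀ a b : J, ψ (a * b) = ψ a * b) :
    ∃ C : ℝ, 0 ≤ C ∧ ∀ a : J, ‖ψ a‖ ≤ C * ‖a‖ := by
  set ψc : J →L[ℂ] J := { toLinearMap := ψ, cont := psi_continuous ψ hψ }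
  exact ⟨‖ψc‖, norm_nonneg _, fun a => ψc.le_opNorm a⟩

private lemma linOpNorm_bound (ψ : J →ₗ[ℂ] J)
    (hne : ∃ C : ℝ, 0 ≤ C ∧ ∀ a : J, ‖ψ a‖ ≤ C * ‖a‖) (a : J) :
    ‖ψ a‖ ≤ linOpNorm ψ * ‖a‖ := by
  by_cases ha : a = 0
  · simp [ha]
  · have hna : 0 < ‖a‖ := norm_pos_iff.mpr ha
    have key : ‖ψ a‖ / ‖a‖ ≤ linOpNorm ψ := by
      refine le_csInf hne (fun C hC => ?_)
      rw [div_le_iff₀ hna]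
      exact hC.2 a
    rwa [div_le_iff₀ hna] at key

private lemma rineq4 {ε t : ℝ} (hε : 0 < ε) (ht : 0 ≤ t) :
    (1 - t / (|t| + ε)) ^ 2 * t ≤ ε := by
  rw [abs_of_nonneg ht]
  have hP : 0 < t + ε := by positivity
  have h1 : 1 - t / (t + ε) = ε / (t + ε) := by field_simp; ring
  rw [h1, div_pow]
  rw [div_mul_eq_mul_div, div_le_iff₀ (by positivity)]
  nlinarith [sq_nonneg t, mul_nonneg ht hε.le]

private lemma approx_unit {n : ℕ} (a : Fin n → J) {η : ℝ} (hη : 0 < η) :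
    ∃ e : J, ‖e‖ ≤ 1 ∧ ∀ j, ‖a j - e * a j‖ ≤ η := by
  classical
  set ε := η ^ 2 with hε_def
  have hε : 0 < ε := by positivity
  set dd : J := ∑ j, a j * star (a j) with hdd_def
  set inrAdd : J →+ Unitization ℂ J :=
    AddMonoidHom.mk' (fun j : J => (j : Unitization ℂ J)) (Unitization.inr_add ℂ) with hinrAdd
  have hdd_inr : ((dd : J) : Unitization ℂ J)
      = ∑ j, (a j : Unitization ℂ J) * star (a j : Unitization ℂ J) := by
    rw [show ((dd : J) : Unitization ℂ J) = inrAdd dd from rfl, hdd_def,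
      map_sum inrAdd (fun j => a j * star (a j)) Finset.univ]
    exact Finset.sum_congr rfl fun j _ => by
      show ((a j * star (a j) : J) : Unitization ℂ J) = _
      rw [Unitization.inr_mul, Unitization.inr_star]
  have hdd0 : 0 ≤ ((dd : J) : Unitization ℂ J) := by
    rw [hdd_inr]
    exact Finset.sum_nonneg fun j _ => mul_star_self_nonneg _
  have hdsa : IsSelfAdjoint ((dd : J) : Unitization ℂ J) := .of_nonneg hdd0
  have hsingle : ∀ j, (a j : Unitization ℂ J) * star (a j : Unitization ℂ J)
      ≤ ((dd : J) : Unitization ℂ J) := by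
    intro j
    rw [hdd_inr]
    exact Finset.single_le_sum
      (f := fun i => (a i : Unitization ℂ J) * star (a i : Unitization ℂ J))
      (fun i _ => mul_star_self_nonneg _) (Finset.mem_univ j)
  have hcontg : Continuous (fun t : ℝ => t / (|t| + ε)) :=
    continuous_id.div (by continuity) (fun t => by positivity)
  set e : J := cfcₙ (fun t : ℝ => t / (|t| + ε)) dd with he_def
  have hinr_e : ((e : J) : Unitization ℂ J)
      = cfc (fun t : ℝ => t / (|t| + ε)) ((dd : J) : Unitization ℂ J) :=
    Unitization.real_cfcₙ_eq_cfc_inr dd _ (by simp)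
  have hspec0 : ∀ t ∈ spectrum ℝ ((dd : J) : Unitization ℂ J), 0 ≤ t :=
    fun t ht => spectrum_nonneg_of_nonneg hdd0 ht
  refine ⟨e, ?_, ?_⟩
  · rw [← Unitization.norm_inr (𝕜 := ℂ) e, hinr_e]
    refine norm_cfc_le zero_le_one fun t ht => ?_
    have ht0 := hspec0 t ht
    rw [Real.norm_eq_abs, abs_of_nonneg ht0, abs_of_nonneg (by positivity)]
    rw [div_le_one (by positivity)]
    linarith
  · intro j
    have key : ((a j - e * a j : J) : Unitization ℂ J)
        = cfc (fun t : ℝ => 1 - t / (|t| + ε)) ((dd : J) : Unitization ℂ J)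
          * (a j : Unitization ℂ J) := by
      rw [Unitization.inr_sub, Unitization.inr_mul, hinr_e]
      rw [cfc_sub (fun _ : ℝ => (1:ℝ)) (fun t : ℝ => t / (|t| + ε)) _ (by fun_prop)
        (hcontg.continuousOn), cfc_const_one ℝ _ hdsa, sub_mul, one_mul]
    rw [← Unitization.norm_inr (𝕜 := ℂ) (a j - e * a j), key]
    have hx : (a j : Unitization ℂ J) * star (a j : Unitization ℂ J)
        ≤ (1:ℝ) • cfc (id : ℝ → ℝ) ((dd : J) : Unitization ℂ J) := by
      rw [cfc_id ℝ _ hdsa, one_smul]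
      exact hsingle j
    have := key_est hdsa zero_le_one continuous_id hx
      (continuous_const.sub hcontg) hη.le
      (fun t ht => ⟨hspec0 t ht, rineq4 hε (hspec0 t ht)⟩)
    rwa [Real.sqrt_one, one_mul] at this

private lemma matrixCLM_apply {H : Type*} [NormedAddCommGroup H] [InnerProductSpace ℂ H]
    {n : ℕ} (M : Matrix (Fin n) (Fin n) (H →L[ℂ] H)) (ξ : PiLp 2 fun _ : Fin n => H)
    (i : Fin n) : matrixCLM M ξ i = ∑ j, M i j (ξ j) := by
  simp [matrixCLM, ContinuousLinearMap.sum_apply]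

private lemma norm_matrixCLM_apply {H : Type*} [NormedAddCommGroup H] [InnerProductSpace ℂ H]
    {n : ℕ} (M : Matrix (Fin n) (Fin n) (H →L[ℂ] H)) (ξ : PiLp 2 fun _ : Fin n => H) :
    ‖matrixCLM M ξ‖ = Real.sqrt (∑ i, ‖∑ j, M i j (ξ j)‖ ^ 2) := by
  rw [PiLp.norm_eq_of_L2]
  congr 1
  exact Finset.sum_congr rfl fun i _ => by rw [matrixCLM_apply]

private lemma matrixCLM_fin_one {H : Type*} [NormedAddCommGroup H] [InnerProductSpace ℂ H]
    (M : Matrix (Fin 1) (Fin 1) (H →L[ℂ] H)) : ‖matrixCLM M‖ = ‖M 0 0‖ := by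
  have hnorm1 : ∀ ξ : PiLp 2 fun _ : Fin 1 => H, ‖ξ‖ = ‖ξ 0‖ := by
    intro ξ
    rw [PiLp.norm_eq_of_L2, Fin.sum_univ_one, Real.sqrt_sq (norm_nonneg _)]
  refine le_antisymm ?_ ?_
  · refine ContinuousLinearMap.opNorm_le_bound _ (norm_nonneg _) fun ξ => ?_
    rw [norm_matrixCLM_apply, Fin.sum_univ_one, Fin.sum_univ_one,
      Real.sqrt_sq (norm_nonneg _), hnorm1 ξ]
    exact (M 0 0).le_opNorm (ξ 0)
  · refine ContinuousLinearMap.opNorm_le_bound _ (norm_nonneg (matrixCLM M)) fun v => ?_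
    set ξ : PiLp 2 (fun _ : Fin 1 => H) := WithLp.toLp 2 (fun _ => v) with hξ_def
    have hξ : ‖ξ‖ = ‖v‖ := hnorm1 ξ
    have h2 : ‖matrixCLM M ξ‖ = ‖M 0 0 v‖ := by
      rw [norm_matrixCLM_apply, Fin.sum_univ_one, Fin.sum_univ_one,
        Real.sqrt_sq (norm_nonneg _)]
    calc ‖M 0 0 v‖ = ‖matrixCLM M ξ‖ := h2.symm
      _ ≤ ‖matrixCLM M‖ * ‖ξ‖ := (matrixCLM M).le_opNorm ξ
      _ = ‖matrixCLM M‖ * ‖v‖ := by rw [hξ]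

section Rep

variable {K : Type*} [NormedAddCommGroup K] [InnerProductSpace ℂ K] [CompleteSpace K]

private lemma row_bound (π : J →⋆ₙₐ[ℂ] (K →L[ℂ] K)) (hπ : ∀ a : J, ‖π a‖ = ‖a‖)
    (ψ : J →ₗ[ℂ] J) (hψ : ∀ a b : J, ψ (a * b) = ψ a * b)
    {n : ℕ} (a : Fin n → J) (ξ : Fin n → K) :
    ‖∑ j, π (ψ (a j)) (ξ j)‖ ≤ linOpNorm ψ * ‖∑ j, π (a j) (ξ j)‖ := by
  classical
  set C := linOpNorm ψ with hC_def
  have hC0 : 0 ≤ C := linOpNorm_nonneg ψ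
  have hbd : ∀ x : J, ‖ψ x‖ ≤ C * ‖x‖ := linOpNorm_bound ψ (psi_exists_bound ψ hψ)
  set v := ∑ j, π (a j) (ξ j) with hv_def
  refine le_of_forall_pos_le_add fun η hη => ?_
  set S := ∑ j, ‖ξ j‖ with hS_def
  have hS0 : 0 ≤ S := Finset.sum_nonneg fun j _ => norm_nonneg _
  have hden : (0:ℝ) < (C + 1) * (1 + S) := by positivity
  set η' := η / ((C + 1) * (1 + S)) with hη'_def
  have hη'0 : 0 < η' := by positivity
  obtain ⟨e, he1, he2⟩ := approx_unit a hη'0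
  have hev : π (ψ e) v = ∑ j, π (ψ (e * a j)) (ξ j) := by
    rw [hv_def, map_sum]
    refine Finset.sum_congr rfl fun j _ => ?_
    rw [hψ e (a j), map_mul π]
    rfl
  have hsplit : ∑ j, π (ψ (a j)) (ξ j)
      = (∑ j, π (ψ (a j - e * a j)) (ξ j)) + π (ψ e) v := by
    rw [hev, ← Finset.sum_add_distrib]
    refine Finset.sum_congr rfl fun j _ => ?_
    rw [map_sub ψ, map_sub π]
    rw [ContinuousLinearMap.sub_apply]
    abel
  have hterm1 : ‖∑ j, π (ψ (a j - e * a j)) (ξ j)‖ ≤ η := by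
    calc ‖∑ j, π (ψ (a j - e * a j)) (ξ j)‖
        ≤ ∑ j, ‖π (ψ (a j - e * a j)) (ξ j)‖ := norm_sum_le _ _
      _ ≤ ∑ j, C * η' * ‖ξ j‖ := by
          refine Finset.sum_le_sum fun j _ => ?_
          calc ‖π (ψ (a j - e * a j)) (ξ j)‖
              ≤ ‖π (ψ (a j - e * a j))‖ * ‖ξ j‖ := ContinuousLinearMap.le_opNorm _ _
            _ = ‖ψ (a j - e * a j)‖ * ‖ξ j‖ := by rw [hπ]
            _ ≤ C * ‖a j - e * a j‖ * ‖ξ j‖ :=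
                mul_le_mul_of_nonneg_right (hbd _) (norm_nonneg _)
            _ ≤ C * η' * ‖ξ j‖ := by
                refine mul_le_mul_of_nonneg_right ?_ (norm_nonneg _)
                exact mul_le_mul_of_nonneg_left (he2 j) hC0
      _ = C * η' * S := by rw [← Finset.mul_sum]
      _ ≤ η := by
          rw [hη'_def]
          rw [show C * (η / ((C + 1) * (1 + S))) * S = η * (C * S) / ((C + 1) * (1 + S)) by ring]
          rw [div_le_iff₀ hden]
          nlinarith
  have hterm2 : ‖π (ψ e) v‖ ≤ C * ‖v‖ := by
    calc ‖π (ψ e) v‖ ≤ ‖π (ψ e)‖ * ‖v‖ := ContinuousLinearMap.le_opNorm _ _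
      _ = ‖ψ e‖ * ‖v‖ := by rw [hπ]
      _ ≤ C * ‖e‖ * ‖v‖ := mul_le_mul_of_nonneg_right (hbd e) (norm_nonneg _)
      _ ≤ C * 1 * ‖v‖ := by
          refine mul_le_mul_of_nonneg_right ?_ (norm_nonneg _)
          exact mul_le_mul_of_nonneg_left he1 hC0
      _ = C * ‖v‖ := by rw [mul_one]
  calc ‖∑ j, π (ψ (a j)) (ξ j)‖
      = ‖(∑ j, π (ψ (a j - e * a j)) (ξ j)) + π (ψ e) v‖ := by rw [← hsplit]
    _ ≤ ‖∑ j, π (ψ (a j - e * a j)) (ξ j)‖ + ‖π (ψ e) v‖ := norm_add_le _ _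
    _ ≤ η + C * ‖v‖ := add_le_add hterm1 hterm2
    _ = C * ‖v‖ + η := by ring

private lemma cb_main (π : J →⋆ₙₐ[ℂ] (K →L[ℂ] K)) (hπ : ∀ a : J, ‖π a‖ = ‖a‖)
    (ψ : J →ₗ[ℂ] J) (hψ : ∀ a b : J, ψ (a * b) = ψ a * b) :
    IsCBBoundRel π ψ (linOpNorm ψ) := by
  intro n X
  set C := linOpNorm ψ with hC_def
  have hC0 : 0 ≤ C := linOpNorm_nonneg ψ
  refine ContinuousLinearMap.opNorm_le_bound _
    (mul_nonneg hC0 (norm_nonneg _)) fun ξ => ?_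
  have h1 : ‖matrixCLM (X.map fun a => π (ψ a)) ξ‖ ≤ C * ‖matrixCLM (X.map ⇑π) ξ‖ := by
    rw [norm_matrixCLM_apply, norm_matrixCLM_apply]
    have hrow : ∀ i, ‖∑ j, (X.map fun a => π (ψ a)) i j (ξ j)‖ ^ 2
        ≤ C ^ 2 * ‖∑ j, (X.map ⇑π) i j (ξ j)‖ ^ 2 := by
      intro i
      have hb := row_bound π hπ ψ hψ (fun j => X i j) ξ
      simp only [Matrix.map_apply]
      calc ‖∑ j, π (ψ (X i j)) (ξ j)‖ ^ 2 ≤ (C * ‖∑ j, π (X i j) (ξ j)‖) ^ 2 :=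
            pow_le_pow_left₀ (norm_nonneg _) hb 2
        _ = C ^ 2 * ‖∑ j, π (X i j) (ξ j)‖ ^ 2 := by ring
    calc Real.sqrt (∑ i, ‖∑ j, (X.map fun a => π (ψ a)) i j (ξ j)‖ ^ 2)
        ≤ Real.sqrt (∑ i, C ^ 2 * ‖∑ j, (X.map ⇑π) i j (ξ j)‖ ^ 2) :=
          Real.sqrt_le_sqrt (Finset.sum_le_sum fun i _ => hrow i)
      _ = Real.sqrt (C ^ 2 * ∑ i, ‖∑ j, (X.map ⇑π) i j (ξ j)‖ ^ 2) := by
          rw [← Finset.mul_sum]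
      _ = C * Real.sqrt (∑ i, ‖∑ j, (X.map ⇑π) i j (ξ j)‖ ^ 2) := by
          rw [Real.sqrt_mul (sq_nonneg _), Real.sqrt_sq hC0]
  calc ‖matrixCLM (X.map fun a => π (ψ a)) ξ‖ ≤ C * ‖matrixCLM (X.map ⇑π) ξ‖ := h1
    _ ≤ C * (‖matrixCLM (X.map ⇑π)‖ * ‖ξ‖) :=
        mul_le_mul_of_nonneg_left ((matrixCLM (X.map ⇑π)).le_opNorm ξ) hC0
    _ = C * ‖matrixCLM (X.map ⇑π)‖ * ‖ξ‖ := (mul_assoc _ _ _).symm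

end Rep

end Aux

/-- A right module map `ψ` on a C*-algebra `J` is automatically bounded, and is even
completely bounded with `‖ψ‖_cb = ‖ψ‖` (the matrix norms being computed via any isometric
representation of `J` on a Hilbert space). -/
theorem right_module_map_automatically_completely_bounded {J : Type*}
    [NonUnitalCStarAlgebra J] (ψ : J →ₗ[ℂ] J) (hψ : ∀ a b : J, ψ (a * b) = ψ a * b) :
    (∃ C : ℝ, 0 ≤ C ∧ ∀ a : J, ‖ψ a‖ ≤ C * ‖a‖) ∧
    (∀ a : J, ‖ψ a‖ ≤ linOpNorm ψ * ‖a‖) ∧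
    ∀ (K : Type*) [NormedAddCommGroup K] [InnerProductSpace ℂ K] [CompleteSpace K]
      (π : J →⋆ₙₐ[ℂ] (K →L[ℂ] K)), (∀ a : J, ‖π a‖ = ‖a‖) →
        IsCBBoundRel π ψ (linOpNorm ψ) ∧ cbNormRel π ψ = linOpNorm ψ := by
  have hEx := psi_exists_bound ψ hψ
  refine ⟨hEx, linOpNorm_bound ψ hEx, ?_⟩
  intro K _ _ _ π hπ
  have hcb : IsCBBoundRel π ψ (linOpNorm ψ) := cb_main π hπ ψ hψ
  refine ⟨hcb, ?_⟩
  have hmem : linOpNorm ψ ∈ {C : ℝ | 0 ≤ C ∧ IsCBBoundRel π ψ C} := ⟨linOpNorm_nonneg ψ, hcb⟩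
  refine le_antisymm (csInf_le ⟨0, fun C hC => hC.1⟩ hmem) ?_
  refine le_csInf ⟨_, hmem⟩ fun C hC => ?_
  refine csInf_le ⟨0, fun D hD => hD.1⟩ ⟨hC.1, fun a => ?_⟩
  have h1 := hC.2 1 (Matrix.of fun _ _ => a)
  rw [matrixCLM_fin_one, matrixCLM_fin_one] at h1
  simpa [Matrix.map_apply, hπ] using h1
end

section
/- Let S = [[1,1],[0,1]] ∈ M₂(ℂ), let A = { S⁻¹·diag(a,b)·S : a, b ∈ ℂ } ⊆ M₂(ℂ), let ω : M₂(ℂ) → M₂(ℂ) be the map preserving the diagonal entries and sending the off-diagonal entries to zero, and define φ : M₂(ℂ) → M₂(ℂ) by φ(X) = S⁻¹·ω(S·X·S⁻¹)·S. Then φ is a linear idempotent map (φ∘φ = φ) whose range is A, φ(M) = M for every M ∈ A, and φ is an A-bimodule map, i.e. φ(M·X·N) = M·φ(X)·N for all M, N ∈ A and X ∈ M₂(ℂ). -/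
/-- The matrix `S = [[1,1],[0,1]]`. -/
def exS : Matrix (Fin 2) (Fin 2) ℂ := !![1, 1; 0, 1]

/-- The (non-selfadjoint) operator algebra `A = S⁻¹·{diag(a,b)}·S ⊆ M₂(ℂ)`. -/
noncomputable def exA : Set (Matrix (Fin 2) (Fin 2) ℂ) :=
  {X | ∃ a b : ℂ, X = exS⁻¹ * Matrix.diagonal ![a, b] * exS}

/-- The conditional expectation of `M₂(ℂ)` onto its diagonal. -/
def exOmega (X : Matrix (Fin 2) (Fin 2) ℂ) : Matrix (Fin 2) (Fin 2) ℂ :=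
  Matrix.diagonal X.diag

/-- The map `φ(X) = S⁻¹·ω(S·X·S⁻¹)·S`. -/
noncomputable def exPhi (X : Matrix (Fin 2) (Fin 2) ℂ) : Matrix (Fin 2) (Fin 2) ℂ :=
  exS⁻¹ * exOmega (exS * X * exS⁻¹) * exS

/-!
`φ` is the diagonal expectation `ω` transported along the similarity `X ↦ S⁻¹ X S`, an algebra
automorphism of `M₂(ℂ)` carrying the diagonal algebra onto `A`. The expectation `ω` is an
idempotent bimodule map over the diagonal matrices onto them, because the diagonal of `D X E`
is `D · diag X · E` for diagonal `D`, `E`; `φ` inherits all of this with `A` in place of the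
diagonal algebra.
-/

namespace Matrix

variable {n R : Type*} [Fintype n] [DecidableEq n] [CommRing R]

lemma diagonal_diag_diagonal_mul_mul_diagonal (d e : n → R) (X : Matrix n n R) :
    diagonal (diagonal d * X * diagonal e).diag = diagonal d * diagonal X.diag * diagonal e := by
  rw [diagonal_mul_diagonal, diagonal_mul_diagonal]
  congr
  ext i
  simp [mul_diagonal, diagonal_mul]

lemma mul_nonsing_inv_conj_cancel {S : Matrix n n R} (hS : IsUnit S.det) (Y : Matrix n n R) :
    S * (S⁻¹ * Y * S) * S⁻¹ = Y := by
  rw [Matrix.mul_assoc, mul_nonsing_inv_cancel_right _ _ hS, mul_nonsing_inv_cancel_left _ _ hS]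

variable (R) in
noncomputable def diagProjConj (S : Matrix n n R) : Matrix n n R →ₗ[R] Matrix n n R where
  toFun X := S⁻¹ * diagonal (S * X * S⁻¹).diag * S
  map_add' X Y := by
    rw [Matrix.mul_add, Matrix.add_mul, diag_add, ← Matrix.add_mul, ← Matrix.mul_add, diagonal_add]
    rfl
  map_smul' c X := by simp

variable {S : Matrix n n R}

lemma diagProjConj_conj_diagonal (hS : IsUnit S.det) (d : n → R) :
    diagProjConj R S (S⁻¹ * diagonal d * S) = S⁻¹ * diagonal d * S := by
  simp only [diagProjConj, LinearMap.coe_mk, AddHom.coe_mk, mul_nonsing_inv_conj_cancel hS,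
    diag_diagonal]

lemma diagProjConj_idem (hS : IsUnit S.det) (X : Matrix n n R) :
    diagProjConj R S (diagProjConj R S X) = diagProjConj R S X :=
  diagProjConj_conj_diagonal hS _

lemma range_diagProjConj (hS : IsUnit S.det) :
    Set.range (diagProjConj R S) = Set.range fun d => S⁻¹ * diagonal d * S := by
  refine subset_antisymm ?_ ?_
  · rintro _ ⟨X, rfl⟩
    exact ⟨_, rfl⟩
  · rintro _ ⟨d, rfl⟩
    exact ⟨_, diagProjConj_conj_diagonal hS d⟩

lemma diagProjConj_conj_diagonal_mul_mul (hS : IsUnit S.det) (d e : n → R) (X : Matrix n n R) :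
    diagProjConj R S ((S⁻¹ * diagonal d * S) * X * (S⁻¹ * diagonal e * S)) =
      (S⁻¹ * diagonal d * S) * diagProjConj R S X * (S⁻¹ * diagonal e * S) := by
  have hconj : S * ((S⁻¹ * diagonal d * S) * X * (S⁻¹ * diagonal e * S)) * S⁻¹ =
      diagonal d * (S * X * S⁻¹) * diagonal e := by
    simp only [Matrix.mul_assoc, mul_nonsing_inv_cancel_left _ _ hS]
    simp only [← Matrix.mul_assoc, mul_nonsing_inv_cancel_right _ _ hS]
  rw [diagProjConj, LinearMap.coe_mk, AddHom.coe_mk, hconj,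
    diagonal_diag_diagonal_mul_mul_diagonal]
  simp only [Matrix.mul_assoc, mul_nonsing_inv_cancel_left _ _ hS]

end Matrix

lemma isUnit_det_exS : IsUnit exS.det := by
  simp [exS, Matrix.det_fin_two_of]

lemma exA_eq_range : exA = Set.range fun d : Fin 2 → ℂ => exS⁻¹ * Matrix.diagonal d * exS := by
  ext X
  constructor
  · rintro ⟨a, b, rfl⟩
    exact ⟨_, rfl⟩
  · rintro ⟨d, rfl⟩
    exact ⟨d 0, d 1, by rw [← FinVec.etaExpand_eq d]; rfl⟩

lemma exPhi_eq_diagProjConj : exPhi = Matrix.diagProjConj ℂ exS := rfl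

/-- `φ` is a linear idempotent `A`-bimodule projection of `M₂(ℂ)` onto the operator
algebra `A`. -/
theorem exPhi_is_bimodule_projection_onto_exA :
    (∀ X Y : Matrix (Fin 2) (Fin 2) ℂ, exPhi (X + Y) = exPhi X + exPhi Y) ∧
    (∀ (c : ℂ) (X : Matrix (Fin 2) (Fin 2) ℂ), exPhi (c • X) = c • exPhi X) ∧
    (∀ X : Matrix (Fin 2) (Fin 2) ℂ, exPhi (exPhi X) = exPhi X) ∧
    Set.range exPhi = exA ∧
    (∀ M ∈ exA, exPhi M = M) ∧
    (∀ M ∈ exA, ∀ N ∈ exA, ∀ X : Matrix (Fin 2) (Fin 2) ℂ,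
      exPhi (M * X * N) = M * exPhi X * N) := by
  rw [exA_eq_range, exPhi_eq_diagProjConj]
  refine ⟨map_add _, map_smul _, Matrix.diagProjConj_idem isUnit_det_exS,
    Matrix.range_diagProjConj isUnit_det_exS, ?_, ?_⟩
  · rintro _ ⟨d, rfl⟩
    exact Matrix.diagProjConj_conj_diagonal isUnit_det_exS d
  · rintro _ ⟨d, rfl⟩ _ ⟨e, rfl⟩ X
    exact Matrix.diagProjConj_conj_diagonal_mul_mul isUnit_det_exS d e X
end
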